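/- arXiv:1511.05133 — 5 statements merged into one kernel-verified Lean document; each statement's English description precedes it below -/
import Mathlib

section
/- Let (θ_k) satisfy θ_0 = 1, θ_k > 0, (1 − θ_{k+1})/θ_{k+1}² = 1/θ_k², let A : R^m → R^p be linear, b ∈ R^p, and let x^{k+1} = (1 − θ_k)x^k + θ_k z^{k+1}. Then ∑_{k=0}^{K} (1/(2θ_k))‖A(z^{k+1}) − b‖² ≥ (1/(2θ_K²))‖A(x^{K+1}) − b‖². -/
/-!
The recurrence for `θ` telescopes: since `1 / θ_{k+1}² = (1 - θ_{k+1}) / θ_{k+1}² + 1 / θ_{k+1}`,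
we get `∑_{k ≤ K} 1 / θ_k = 1 / θ_K²` and `∑_{k ≤ K} z^{k+1} / θ_k = x^{K+1} / θ_K²`.
Hence `x^{K+1}` is the convex combination of the `z^{k+1}` with weights `θ_K² / θ_k`, and Jensen's
inequality for the convex function `y ↦ ‖A y - b‖²` gives the bound.
-/

open Finset

section Telescoping

variable {𝕜 E : Type*} [Field 𝕜] [AddCommGroup E] [Module 𝕜 E]

theorem one_div_sq_mul_self (t : 𝕜) : 1 / t ^ 2 * t = 1 / t := by
  rcases eq_or_ne t 0 with rfl | ht
  · simp
  · field_simp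

theorem sum_range_one_div_eq_one_div_sq (θ : ℕ → 𝕜) (h0 : θ 0 = 1)
    (hrec : ∀ k, (1 - θ (k + 1)) / θ (k + 1) ^ 2 = 1 / θ k ^ 2) (K : ℕ) :
    ∑ k ∈ range (K + 1), 1 / θ k = 1 / θ K ^ 2 := by
  induction K with
  | zero => simp [h0]
  | succ K ih =>
    rw [sum_range_succ, ih, ← hrec K, ← one_div_sq_mul_self]
    ring

theorem sum_range_one_div_smul_eq_one_div_sq_smul (θ : ℕ → 𝕜) (h0 : θ 0 = 1)
    (hrec : ∀ k, (1 - θ (k + 1)) / θ (k + 1) ^ 2 = 1 / θ k ^ 2) (x z : ℕ → E)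
    (hx : ∀ k, x (k + 1) = (1 - θ k) • x k + θ k • z (k + 1)) (K : ℕ) :
    ∑ k ∈ range (K + 1), (1 / θ k) • z (k + 1) = (1 / θ K ^ 2) • x (K + 1) := by
  induction K with
  | zero => simp [hx 0, h0]
  | succ K ih =>
    rw [sum_range_succ, ih, ← hrec K, hx (K + 1), smul_add, smul_smul, smul_smul,
      one_div_sq_mul_self]
    congr 2
    ring

end Telescoping

theorem norm_sq_map_sum_le {E F ι : Type*} [NormedAddCommGroup E] [NormedSpace ℝ E]
    [NormedAddCommGroup F] [NormedSpace ℝ F] (f : E →ᵃ[ℝ] F) {t : Finset ι} {w : ι → ℝ}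
    (h₀ : ∀ i ∈ t, 0 ≤ w i) (h₁ : ∑ i ∈ t, w i = 1) (p : ι → E) :
    ‖f (∑ i ∈ t, w i • p i)‖ ^ 2 ≤ ∑ i ∈ t, w i * ‖f (p i)‖ ^ 2 := by
  have hconv : ConvexOn ℝ Set.univ fun y : F ↦ ‖y‖ ^ 2 :=
    convexOn_univ_norm.pow (fun _ _ ↦ norm_nonneg _) 2
  exact (hconv.comp_affineMap f).map_sum_le h₀ h₁ fun _ _ ↦ trivial

theorem residual_sum_lower_bound (md p : ℕ) (θ : ℕ → ℝ) (h0 : θ 0 = 1)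
    (hpos : ∀ k, 0 < θ k)
    (hrec : ∀ k, (1 - θ (k + 1)) / (θ (k + 1)) ^ 2 = 1 / (θ k) ^ 2)
    (A : EuclideanSpace ℝ (Fin md) →ₗ[ℝ] EuclideanSpace ℝ (Fin p))
    (b : EuclideanSpace ℝ (Fin p))
    (x z : ℕ → EuclideanSpace ℝ (Fin md))
    (hx : ∀ k, x (k + 1) = (1 - θ k) • x k + θ k • z (k + 1)) (K : ℕ) :
    ∑ k ∈ Finset.range (K + 1), (1 / (2 * θ k)) * ‖A (z (k + 1)) - b‖ ^ 2 ≥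
      (1 / (2 * (θ K) ^ 2)) * ‖A (x (K + 1)) - b‖ ^ 2 := by
  have hθ : ∀ k, θ k ≠ 0 := fun k ↦ (hpos k).ne'
  set w : ℕ → ℝ := fun k ↦ θ K ^ 2 * (1 / θ k)
  have hw₀ : ∀ k ∈ range (K + 1), 0 ≤ w k := fun k _ ↦ by have := hpos k; positivity
  have hw₁ : ∑ k ∈ range (K + 1), w k = 1 := by
    rw [← mul_sum, sum_range_one_div_eq_one_div_sq θ h0 hrec,
      mul_one_div_cancel (pow_ne_zero 2 (hθ K))]
  have hwx : ∑ k ∈ range (K + 1), w k • z (k + 1) = x (K + 1) := by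
    simp only [w, ← smul_smul, ← smul_sum]
    rw [sum_range_one_div_smul_eq_one_div_sq_smul θ h0 hrec x z hx, smul_smul,
      mul_one_div_cancel (pow_ne_zero 2 (hθ K)), one_smul]
  have hjensen := norm_sq_map_sum_le (A.toAffineMap - AffineMap.const ℝ _ b) hw₀ hw₁
    (fun k ↦ z (k + 1))
  simp only [hwx, AffineMap.coe_sub, Pi.sub_apply, LinearMap.coe_toAffineMap,
    AffineMap.const_apply] at hjensen
  calc (1 / (2 * θ K ^ 2)) * ‖A (x (K + 1)) - b‖ ^ 2
      ≤ (1 / (2 * θ K ^ 2)) * ∑ k ∈ range (K + 1), w k * ‖A (z (k + 1)) - b‖ ^ 2 := by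
        gcongr
    _ = ∑ k ∈ range (K + 1), (1 / (2 * θ k)) * ‖A (z (k + 1)) - b‖ ^ 2 := by
        rw [mul_sum]
        refine sum_congr rfl fun k _ ↦ ?_
        simp only [w]
        field_simp [hθ K, hθ k]
end

section
/- Let g be convex differentiable with L-Lipschitz gradient, h convex, A linear, b a vector, θ ∈ (0,1], β > 0, λ^k, and points x^k, z^k, y^{k+1} = (1−θ)x^k + θ z^k. Let z^{k+1} minimize ⟨∇g(y^{k+1}), x⟩ + h(x) + ⟨λ^k, A x⟩ + (β/2)‖A x − b‖² + (Lθ/2)‖x − z^k‖², set x^{k+1} = (1−θ)x^k + θ z^{k+1} and λ^{k+1} = λ^k + β(A z^{k+1} − b). Then for f = g + h and any x: f(x^{k+1}) − f(x) − θ⟨Aᵀλ^{k+1}, x − z^{k+1}⟩ ≤ (1−θ)(f(x^k) − f(x)) + (Lθ²/2)(‖z^k − x‖² − ‖z^{k+1} − x‖²). -/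
/-!
The smooth part is controlled by the descent lemma at `y = yk1`, which holds because
`t ↦ g (v + t • w) - t * ⟪∇g v, w⟫ - L / 2 * t ^ 2 * ‖w‖ ^ 2` has nonpositive derivative for
`t > 0`; since `xk1 - y = θ • (zk1 - zk)` splits as a convex combination of `xk - y`, `x - y` and
`zk1 - x`, the gradient inequalities of `g` at `xk` and `x` finish it. For the nonsmooth part,
convexity of `h` reduces `h xk1` to `h zk1`, and the optimality of `zk1` gives
`-(∇g y + Aᵀ lamk1 + L θ (zk1 - zk)) ∈ ∂h zk1`. The three-point identity for `‖zk - x‖ ^ 2`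
turns the proximal term into the difference of squared distances.
-/

open scoped RealInnerProductSpace
open Filter Set Topology

section LineDeriv

variable {E : Type*} [AddCommGroup E] [Module ℝ E] {s : Set E} {f : E → ℝ} {c d : ℝ} {x y v : E}

theorem HasLineDerivAt.le_of_eventually_sub_le (hf : HasLineDerivAt ℝ f d x v)
    (hc : ∀ᶠ t in 𝓝[>] 0, f (x + t • v) - f x ≤ t * c) : d ≤ c := by
  refine le_of_tendsto hf.tendsto_slope_zero_right ?_
  filter_upwards [hc, self_mem_nhdsWithin] with t ht (htpos : 0 < t)
  rwa [smul_eq_mul, inv_mul_le_iff₀ htpos]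

theorem HasLineDerivAt.le_of_eventually_le_sub (hf : HasLineDerivAt ℝ f d x v)
    (hc : ∀ᶠ t in 𝓝[>] 0, t * c ≤ f (x + t • v) - f x) : c ≤ d := by
  refine ge_of_tendsto hf.tendsto_slope_zero_right ?_
  filter_upwards [hc, self_mem_nhdsWithin] with t ht (htpos : 0 < t)
  rwa [smul_eq_mul, le_inv_mul_iff₀ htpos]

theorem ConvexOn.apply_add_smul_sub_le (hf : ConvexOn ℝ s f) (hx : x ∈ s) (hy : y ∈ s) {t : ℝ}
    (ht : t ∈ Icc 0 1) : f (x + t • (y - x)) - f x ≤ t * (f y - f x) := by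
  have key := hf.2 hx hy (sub_nonneg.2 ht.2) ht.1 (sub_add_cancel 1 t)
  rw [show (1 - t) • x + t • y = x + t • (y - x) by module, smul_eq_mul, smul_eq_mul] at key
  linarith

theorem ConvexOn.le_sub_of_hasLineDerivAt (hf : ConvexOn ℝ s f) (hx : x ∈ s) (hy : y ∈ s)
    (hd : HasLineDerivAt ℝ f d x (y - x)) : d ≤ f y - f x :=
  hd.le_of_eventually_sub_le <| by
    filter_upwards [Ioc_mem_nhdsGT one_pos] with t ht
    exact hf.apply_add_smul_sub_le hx hy (Ioc_subset_Icc_self ht)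

theorem ConvexOn.le_add_of_isMinOn_add {h q : E → ℝ} (hh : ConvexOn ℝ s h) (hx : x ∈ s)
    (hy : y ∈ s) (hmin : IsMinOn (h + q) s x) (hq : HasLineDerivAt ℝ q d x (y - x)) :
    h x ≤ h y + d := by
  have hd : h x - h y ≤ d := hq.le_of_eventually_le_sub <| by
    filter_upwards [Ioc_mem_nhdsGT one_pos] with t ht
    have hmin_t : h x + q x ≤ h (x + t • (y - x)) + q (x + t • (y - x)) :=
      hmin (hh.1.add_smul_sub_mem hx hy (Ioc_subset_Icc_self ht))
    have hconv_t := hh.apply_add_smul_sub_le hx hy (Ioc_subset_Icc_self ht)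
    linarith
  linarith

end LineDeriv

section Gradient

variable {F : Type*} [NormedAddCommGroup F] [InnerProductSpace ℝ F] [CompleteSpace F]
  {f : F → ℝ} {f' : F → F} {L : ℝ}

theorem ConvexOn.add_inner_le_of_hasGradientAt (hf : ConvexOn ℝ univ f) {x : F}
    (hd : HasGradientAt f (f' x) x) (y : F) : f x + ⟪f' x, y - x⟫ ≤ f y := by
  have := hf.le_sub_of_hasLineDerivAt (mem_univ x) (mem_univ y) (hd.hasFDerivAt.hasLineDerivAt _)
  rw [InnerProductSpace.toDual_apply_apply] at this
  linarith

theorem hasDerivAt_apply_add_smul (hf : ∀ x, HasGradientAt f (f' x) x) (x v : F) (t : ℝ) :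
    HasDerivAt (fun s : ℝ => f (x + s • v)) ⟪f' (x + t • v), v⟫ t := by
  have hline : HasDerivAt (fun s : ℝ => x + s • v) v t := by
    simpa using ((hasDerivAt_id t).smul_const v).const_add x
  have := (hf (x + t • v)).hasFDerivAt.comp_hasDerivAt t hline
  rw [InnerProductSpace.toDual_apply_apply] at this
  exact this

theorem le_add_inner_add_sq_of_lipschitz_gradient (hf : ∀ x, HasGradientAt f (f' x) x)
    (hlip : ∀ x y, ‖f' x - f' y‖ ≤ L * ‖x - y‖) (x y : F) :
    f y ≤ f x + ⟪f' x, y - x⟫ + L / 2 * ‖y - x‖ ^ 2 := by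
  set v := y - x
  set φ : ℝ → ℝ := fun t => f (x + t • v) - t * ⟪f' x, v⟫ - L / 2 * t ^ 2 * ‖v‖ ^ 2
  have hφ : ∀ t, HasDerivAt φ (⟪f' (x + t • v), v⟫ - ⟪f' x, v⟫ - L * t * ‖v‖ ^ 2) t := by
    intro t
    refine (((hasDerivAt_apply_add_smul hf x v t).sub ((hasDerivAt_id t).mul_const ⟪f' x, v⟫)).sub
      (((hasDerivAt_pow 2 t).const_mul (L / 2)).mul_const (‖v‖ ^ 2))).congr_deriv ?_
    simp only [one_mul, Nat.cast_ofNat, Nat.add_one_sub_one, pow_one]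
    ring
  have hφ' : ∀ t ∈ interior (Ici (0 : ℝ)),
      ⟪f' (x + t • v), v⟫ - ⟪f' x, v⟫ - L * t * ‖v‖ ^ 2 ≤ 0 := by
    intro t ht
    rw [interior_Ici] at ht
    have := hlip (x + t • v) x
    rw [add_sub_cancel_left, norm_smul, Real.norm_of_nonneg ht.le] at this
    suffices ⟪f' (x + t • v), v⟫ - ⟪f' x, v⟫ ≤ L * t * ‖v‖ ^ 2 by linarith
    calc ⟪f' (x + t • v), v⟫ - ⟪f' x, v⟫ = ⟪f' (x + t • v) - f' x, v⟫ := (inner_sub_left ..).symm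
      _ ≤ ‖f' (x + t • v) - f' x‖ * ‖v‖ := real_inner_le_norm _ _
      _ ≤ L * (t * ‖v‖) * ‖v‖ := by gcongr
      _ = L * t * ‖v‖ ^ 2 := by ring
  have hanti := antitoneOn_of_hasDerivWithinAt_nonpos (convex_Ici 0)
    (fun t _ => (hφ t).continuousAt.continuousWithinAt) (fun t _ => (hφ t).hasDerivWithinAt) hφ'
  have h10 : φ 1 ≤ φ 0 := hanti (mem_Ici.2 le_rfl) (mem_Ici.2 zero_le_one) zero_le_one
  simp only [φ, one_smul, zero_smul, add_zero, show x + v = y from add_sub_cancel x y] at h10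
  linarith

theorem ConvexOn.le_add_inner_of_isMinOn_add {h q : F → ℝ} {q' z : F} (hh : ConvexOn ℝ univ h)
    (hq : HasGradientAt q q' z) (hmin : IsMinOn (h + q) univ z) (x : F) :
    h z ≤ h x + ⟪q', x - z⟫ := by
  have := hh.le_add_of_isMinOn_add (mem_univ z) (mem_univ x) hmin (hq.hasFDerivAt.hasLineDerivAt _)
  rwa [InnerProductSpace.toDual_apply_apply] at this

theorem ConvexOn.accelerated_step_le (hf : ConvexOn ℝ univ f)
    (hgrad : ∀ x, HasGradientAt f (f' x) x) (hlip : ∀ x y, ‖f' x - f' y‖ ≤ L * ‖x - y‖)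
    {θ : ℝ} (hθ₀ : 0 ≤ θ) (hθ₁ : θ ≤ 1) (x₀ z₀ z₁ x : F) :
    f ((1 - θ) • x₀ + θ • z₁) ≤ (1 - θ) * f x₀ +
      θ * (f x + ⟪f' ((1 - θ) • x₀ + θ • z₀), z₁ - x⟫) + L * θ ^ 2 / 2 * ‖z₁ - z₀‖ ^ 2 := by
  set y := (1 - θ) • x₀ + θ • z₀
  have hdesc := le_add_inner_add_sq_of_lipschitz_gradient hgrad hlip y ((1 - θ) • x₀ + θ • z₁)
  have h₀ := hf.add_inner_le_of_hasGradientAt (hgrad y) x₀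
  have h₁ := hf.add_inner_le_of_hasGradientAt (hgrad y) x
  have hstep : (1 - θ) • x₀ + θ • z₁ - y = (1 - θ) • (x₀ - y) + θ • (x - y) + θ • (z₁ - x) := by
    module
  have hnorm : ‖(1 - θ) • x₀ + θ • z₁ - y‖ = θ * ‖z₁ - z₀‖ := by
    rw [show (1 - θ) • x₀ + θ • z₁ - y = θ • (z₁ - z₀) by module, norm_smul,
      Real.norm_of_nonneg hθ₀]
  rw [hnorm, hstep, inner_add_right, inner_add_right, real_inner_smul_right,
    real_inner_smul_right, real_inner_smul_right] at hdesc
  linear_combination hdesc + (1 - θ) * h₀ + θ * h₁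

section AugmentedLagrangian

variable {G : Type*} [NormedAddCommGroup G] [InnerProductSpace ℝ G] [CompleteSpace G]

theorem hasGradientAt_linearized_augmentedLagrangian (a z₀ : F) (lam b : G) (A : F →L[ℝ] G)
    (β c : ℝ) (z : F) :
    HasGradientAt (fun u => ⟪a, u⟫ + ⟪lam, A u⟫ + β / 2 * ‖A u - b‖ ^ 2 + c / 2 * ‖u - z₀‖ ^ 2)
      (a + ContinuousLinearMap.adjoint A (lam + β • (A z - b)) + c • (z - z₀)) z := by
  rw [hasGradientAt_iff_hasFDerivAt]
  refine (((((innerSL ℝ a).hasFDerivAt.add ((innerSL ℝ lam).comp A).hasFDerivAt).add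
    (((A.hasFDerivAt.sub_const b).norm_sq).const_mul (β / 2))).add
    ((((hasFDerivAt_id z).sub_const z₀).norm_sq).const_mul (c / 2)))).congr_fderiv ?_
  ext w
  simp only [map_sub, ContinuousLinearMap.sub_comp, id_eq, ContinuousLinearMap.comp_id, add_apply,
    coe_innerSL_apply, ContinuousLinearMap.comp_apply, smul_apply, sub_apply, nsmul_eq_mul,
    Nat.cast_ofNat, smul_eq_mul, map_add, map_smul, InnerProductSpace.toDual_apply_apply,
    ContinuousLinearMap.adjoint_inner_left]
  ring

end AugmentedLagrangian

end Gradient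

theorem fast_palm_one_step_general (m p : ℕ)
    (g h : EuclideanSpace ℝ (Fin m) → ℝ)
    (g' : EuclideanSpace ℝ (Fin m) → EuclideanSpace ℝ (Fin m)) (L : ℝ)
    (hgconv : ConvexOn ℝ Set.univ g) (hhconv : ConvexOn ℝ Set.univ h)
    (hgrad : ∀ x, HasGradientAt g (g' x) x)
    (hlip : ∀ x y, ‖g' x - g' y‖ ≤ L * ‖x - y‖)
    (A : EuclideanSpace ℝ (Fin m) →L[ℝ] EuclideanSpace ℝ (Fin p))
    (b : EuclideanSpace ℝ (Fin p))
    (θ : ℝ) (hθ : θ ∈ Set.Ioc (0 : ℝ) 1) (β : ℝ)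
    (lamk lamk1 : EuclideanSpace ℝ (Fin p))
    (xk zk yk1 zk1 xk1 : EuclideanSpace ℝ (Fin m))
    (hy : yk1 = (1 - θ) • xk + θ • zk)
    (hz : ∀ u : EuclideanSpace ℝ (Fin m),
      ⟪g' yk1, zk1⟫ + h zk1 + ⟪lamk, A zk1⟫ + β / 2 * ‖A zk1 - b‖ ^ 2 +
        L * θ / 2 * ‖zk1 - zk‖ ^ 2 ≤
      ⟪g' yk1, u⟫ + h u + ⟪lamk, A u⟫ + β / 2 * ‖A u - b‖ ^ 2 +
        L * θ / 2 * ‖u - zk‖ ^ 2)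
    (hx : xk1 = (1 - θ) • xk + θ • zk1)
    (hlam : lamk1 = lamk + β • (A zk1 - b))
    (x : EuclideanSpace ℝ (Fin m)) :
    (g xk1 + h xk1) - (g x + h x) - θ * ⟪ContinuousLinearMap.adjoint A lamk1, x - zk1⟫ ≤
      (1 - θ) * ((g xk + h xk) - (g x + h x)) +
        L * θ ^ 2 / 2 * (‖zk - x‖ ^ 2 - ‖zk1 - x‖ ^ 2) := by
  obtain ⟨hθ₀, hθ₁⟩ := hθ
  subst hx hlam
  have hg := hgconv.accelerated_step_le hgrad hlip hθ₀.le hθ₁ xk zk zk1 x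
  rw [← hy] at hg
  have hh : h ((1 - θ) • xk + θ • zk1) ≤ (1 - θ) * h xk + θ * h zk1 :=
    hhconv.2 (mem_univ _) (mem_univ _) (sub_nonneg.2 hθ₁) hθ₀.le (sub_add_cancel 1 θ)
  have hopt := hhconv.le_add_inner_of_isMinOn_add
    (hasGradientAt_linearized_augmentedLagrangian (g' yk1) zk lamk b A β (L * θ) zk1)
    (isMinOn_univ_iff.2 fun u => by simp only [Pi.add_apply]; linarith [hz u]) x
  rw [inner_add_left, inner_add_left, real_inner_smul_left] at hopt
  have hgrad_sign : ⟪g' yk1, zk1 - x⟫ = -⟪g' yk1, x - zk1⟫ := by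
    rw [← inner_neg_right, neg_sub]
  have hnorm : ‖zk - x‖ ^ 2 = ‖zk1 - zk‖ ^ 2 + 2 * ⟪zk1 - zk, x - zk1⟫ + ‖zk1 - x‖ ^ 2 := by
    rw [norm_sub_rev zk x, norm_sub_rev zk1 x, ← norm_add_sq_real, sub_add_sub_cancel']
  linear_combination hg + hh + θ * hopt + θ * hgrad_sign - L * θ ^ 2 / 2 * hnorm

theorem fast_palm_one_step (m p : ℕ)
    (g h : EuclideanSpace ℝ (Fin m) → ℝ)
    (g' : EuclideanSpace ℝ (Fin m) → EuclideanSpace ℝ (Fin m)) (L : ℝ) (hL : 0 ≤ L)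
    (hgconv : ConvexOn ℝ Set.univ g) (hhconv : ConvexOn ℝ Set.univ h)
    (hgrad : ∀ x, HasGradientAt g (g' x) x)
    (hlip : ∀ x y, ‖g' x - g' y‖ ≤ L * ‖x - y‖)
    (A : EuclideanSpace ℝ (Fin m) →L[ℝ] EuclideanSpace ℝ (Fin p))
    (b : EuclideanSpace ℝ (Fin p))
    (θ : ℝ) (hθ : θ ∈ Set.Ioc (0 : ℝ) 1) (β : ℝ) (hβ : 0 < β)
    (lamk lamk1 : EuclideanSpace ℝ (Fin p))
    (xk zk yk1 zk1 xk1 : EuclideanSpace ℝ (Fin m))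
    (hy : yk1 = (1 - θ) • xk + θ • zk)
    (hz : ∀ u : EuclideanSpace ℝ (Fin m),
      ⟪g' yk1, zk1⟫ + h zk1 + ⟪lamk, A zk1⟫ + β / 2 * ‖A zk1 - b‖ ^ 2 +
        L * θ / 2 * ‖zk1 - zk‖ ^ 2 ≤
      ⟪g' yk1, u⟫ + h u + ⟪lamk, A u⟫ + β / 2 * ‖A u - b‖ ^ 2 +
        L * θ / 2 * ‖u - zk‖ ^ 2)
    (hx : xk1 = (1 - θ) • xk + θ • zk1)
    (hlam : lamk1 = lamk + β • (A zk1 - b))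
    (x : EuclideanSpace ℝ (Fin m)) :
    (g xk1 + h xk1) - (g x + h x) - θ * ⟪ContinuousLinearMap.adjoint A lamk1, x - zk1⟫ ≤
      (1 - θ) * ((g xk + h xk) - (g x + h x)) +
        L * θ ^ 2 / 2 * (‖zk - x‖ ^ 2 - ‖zk1 - x‖ ^ 2) :=
  fast_palm_one_step_general m p g h g' L hgconv hhconv hgrad hlip A b θ hθ β lamk lamk1 xk zk yk1
    zk1 xk1 hy hz hx hlam x
end

section
/- Under the Fast PALM algorithm (θ_0 = β_0 = 1, θ_{k+1} = (−θ_k² + √(θ_k⁴+4θ_k²))/2, β_k = 1/θ_k, with interpolation updates y^{k+1} = (1−θ_k)x^k + θ_k z^k, x^{k+1} = (1−θ_k)x^k + θ_k z^{k+1}, dual update λ^{k+1} = λ^k + β_k(A z^{k+1} − b), and z^{k+1} minimizing the linearized augmented Lagrangian subproblem), for any K ≥ 0 the iterate x^{K+1} satisfies f(x^{K+1}) − f(x*) + ⟨λ*, A x^{K+1} − b⟩ + (1/2)‖A x^{K+1} − b‖² ≤ (2/(K+2)²)(L‖z^0 − x*‖² + ‖λ^0 − λ*‖²). -/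
/-!
With `Φ` the augmented-Lagrangian gap `f x - f x* + ⟪λ*, A x - b⟫ + ‖A x - b‖² / 2`, the quantity
`V_k = (1 - θ_k) / θ_k² · Φ(x_k) + ‖λ_k - λ*‖² / 2 + L/2 · ‖z_k - x*‖²` does not increase.
One step combines the descent lemma and the gradient inequality for `g` at `y_{k+1}`, convexity
of `h`, the three-point inequality for the strongly convex subproblem solved by `z_{k+1}` (tested
at `x*`, where `A x* = b`), and the exact expansion of `‖λ_{k+1} - λ*‖²`; the rule for `θ` is
precisely `(1 - θ_{k+1}) / θ_{k+1}² = 1 / θ_k²`, which makes the coefficients telescope. As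
`θ_0 = 1`, `V_0` is the initial distance, and `1 / θ_{k+1} ≥ 1 / θ_k + 1 / 2` gives
`θ_K ≤ 2 / (K + 2)`.
-/

open scoped RealInnerProductSpace

/-- The convex subdifferential of `f` at `x`. -/
def subdiff {m : ℕ} (f : EuclideanSpace ℝ (Fin m) → ℝ)
    (x : EuclideanSpace ℝ (Fin m)) : Set (EuclideanSpace ℝ (Fin m)) :=
  {g | ∀ y, f x + ⟪g, y - x⟫ ≤ f y}

open Set Filter Topology

theorem norm_one_sub_smul_add_smul_sub_sq {F : Type*} [NormedAddCommGroup F]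
    [InnerProductSpace ℝ F] (a b c : F) (t : ℝ) :
    ‖(1 - t) • a + t • b - c‖ ^ 2 =
      (1 - t) * ‖a - c‖ ^ 2 + t * ‖b - c‖ ^ 2 - t * (1 - t) * ‖b - a‖ ^ 2 := by
  simp only [← real_inner_self_eq_norm_sq, inner_add_left, inner_add_right,
    inner_sub_left, inner_sub_right, real_inner_smul_left, real_inner_smul_right,
    real_inner_comm a b, real_inner_comm a c, real_inner_comm b c]
  ring

theorem add_le_of_isMin_of_comb_le {E : Type*} [AddCommGroup E] [Module ℝ E]
    {φ : E → ℝ} {z u : E} {D : ℝ} (hmin : ∀ v, φ z ≤ φ v)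
    (hcomb : ∀ t ∈ Ioc (0 : ℝ) 1,
      φ ((1 - t) • z + t • u) ≤ (1 - t) * φ z + t * φ u - t * (1 - t) * D) :
    φ z + D ≤ φ u := by
  have hnear : ∀ᶠ t in 𝓝[>] (0 : ℝ), φ z + (1 - t) * D ≤ φ u := by
    filter_upwards [Ioc_mem_nhdsGT zero_lt_one] with t ht
    have h := (hmin _).trans (hcomb t ht)
    nlinarith [ht.1]
  have hlim : Tendsto (fun t : ℝ => φ z + (1 - t) * D) (𝓝[>] 0) (𝓝 (φ z + D)) := by
    have hcont : Continuous fun t : ℝ => φ z + (1 - t) * D := by fun_prop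
    simpa using (hcont.tendsto 0).mono_left nhdsWithin_le_nhds
  exact le_of_tendsto hlim hnear

section Gradient

variable {E : Type*} [NormedAddCommGroup E] [InnerProductSpace ℝ E] [CompleteSpace E]
  {g : E → ℝ} {g' : E → E}

theorem hasDerivAt_comp_add_smul_of_hasGradientAt (hgrad : ∀ x, HasGradientAt g (g' x) x)
    (x v : E) (t : ℝ) :
    HasDerivAt (fun s : ℝ => g (x + s • v)) ⟪g' (x + t • v), v⟫ t := by
  have hline : HasDerivAt (fun s : ℝ => x + s • v) v t := by
    simpa using ((hasDerivAt_id t).smul_const v).const_add x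
  have hcomp := (hgrad (x + t • v)).hasFDerivAt.comp_hasDerivAt t hline
  simp only [InnerProductSpace.toDual_apply_apply] at hcomp
  exact hcomp

theorem ConvexOn.add_inner_gradient_le (hconv : ConvexOn ℝ univ g)
    (hgrad : ∀ x, HasGradientAt g (g' x) x) (x u : E) :
    g x + ⟪g' x, u - x⟫ ≤ g u := by
  have hline : ConvexOn ℝ univ (fun s : ℝ => g (x + s • (u - x))) := by
    refine (hconv.comp_affineMap (AffineMap.lineMap x u)).congr fun s _ => ?_
    simp [AffineMap.lineMap_apply_module', add_comm]
  have hderiv := hasDerivAt_comp_add_smul_of_hasGradientAt hgrad x (u - x) 0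
  have hslope := hline.le_slope_of_hasDerivAt (mem_univ 0) (mem_univ 1) one_pos hderiv
  simp only [slope_def_field, zero_smul, add_zero, one_smul, add_sub_cancel] at hslope
  linarith

theorem image_add_le_of_lipschitz_gradient {L : ℝ} (hgrad : ∀ x, HasGradientAt g (g' x) x)
    (hlip : ∀ x y, ‖g' x - g' y‖ ≤ L * ‖x - y‖) (x v : E) :
    g (x + v) ≤ g x + ⟪g' x, v⟫ + L / 2 * ‖v‖ ^ 2 := by
  have hderiv := hasDerivAt_comp_add_smul_of_hasGradientAt hgrad x v
  have hquad (t : ℝ) : HasDerivAt (fun s : ℝ => g x + s * ⟪g' x, v⟫ + L / 2 * ‖v‖ ^ 2 * s ^ 2)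
      (⟪g' x, v⟫ + L * ‖v‖ ^ 2 * t) t := by
    refine ((((hasDerivAt_id t).mul_const ⟪g' x, v⟫).const_add (g x)).add
      ((hasDerivAt_pow 2 t).const_mul (L / 2 * ‖v‖ ^ 2))).congr_deriv ?_
    simp only [one_mul, Nat.cast_ofNat]
    ring
  have hslope (t : ℝ) (ht : 0 ≤ t) : ⟪g' (x + t • v), v⟫ ≤ ⟪g' x, v⟫ + L * ‖v‖ ^ 2 * t := by
    calc ⟪g' (x + t • v), v⟫ = ⟪g' x, v⟫ + ⟪g' (x + t • v) - g' x, v⟫ := by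
          rw [inner_sub_left]; ring
      _ ≤ ⟪g' x, v⟫ + ‖g' (x + t • v) - g' x‖ * ‖v‖ := by
          gcongr; exact real_inner_le_norm _ _
      _ ≤ ⟪g' x, v⟫ + L * ‖t • v‖ * ‖v‖ := by
          gcongr; simpa using hlip (x + t • v) x
      _ = ⟪g' x, v⟫ + L * ‖v‖ ^ 2 * t := by
          rw [norm_smul, Real.norm_of_nonneg ht]; ring
  have := image_le_of_deriv_right_le_deriv_boundary (a := 0) (b := 1)
    (fun t _ => (hderiv t).continuousAt.continuousWithinAt)
    (fun t _ => (hderiv t).hasDerivWithinAt) (by simp)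
    (fun t _ => (hquad t).continuousAt.continuousWithinAt) (fun t _ => (hquad t).hasDerivWithinAt)
    (fun t ht => hslope t ht.1) (right_mem_Icc.2 zero_le_one)
  simpa [mul_comm] using this

theorem accelerated_gradient_step_le {L θ : ℝ} (hconv : ConvexOn ℝ univ g)
    (hgrad : ∀ x, HasGradientAt g (g' x) x) (hlip : ∀ x y, ‖g' x - g' y‖ ≤ L * ‖x - y‖)
    (hθ₀ : 0 ≤ θ) (hθ₁ : θ ≤ 1) (x z z' u : E) :
    g ((1 - θ) • x + θ • z') ≤ (1 - θ) * g x +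
      θ * (g u + ⟪g' ((1 - θ) • x + θ • z), z' - u⟫) + L * θ ^ 2 / 2 * ‖z' - z‖ ^ 2 := by
  set y := (1 - θ) • x + θ • z
  have hdescent := image_add_le_of_lipschitz_gradient hgrad hlip y (θ • (z' - z))
  have hx := hconv.add_inner_gradient_le hgrad y x
  have hu := hconv.add_inner_gradient_le hgrad y u
  have hstep : y + θ • (z' - z) = (1 - θ) • x + θ • z' := by simp only [y]; module
  have hdir : θ • (z' - z) - (1 - θ) • (x - y) - θ • (u - y) = θ • (z' - u) := by
    simp only [y]; module
  have hinner := congrArg (⟪g' y, ·⟫) hdir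
  simp only [inner_sub_right, real_inner_smul_right] at hinner
  rw [hstep, norm_smul, Real.norm_of_nonneg hθ₀, mul_pow] at hdescent
  simp only [inner_sub_right, real_inner_smul_right] at hdescent hx hu hinner ⊢
  linarith [mul_le_mul_of_nonneg_left hx (sub_nonneg.2 hθ₁), mul_le_mul_of_nonneg_left hu hθ₀]

end Gradient

section AugmentedLagrangian

variable {E F : Type*} [NormedAddCommGroup E] [InnerProductSpace ℝ E]
  [NormedAddCommGroup F] [InnerProductSpace ℝ F]

noncomputable def linearizedAugLagrangian (c : E) (h : E → ℝ) (A : E →L[ℝ] F) (b lam : F)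
    (β μ : ℝ) (z₀ u : E) : ℝ :=
  ⟪c, u⟫ + h u + ⟪lam, A u⟫ + β / 2 * ‖A u - b‖ ^ 2 + μ / 2 * ‖u - z₀‖ ^ 2

theorem linearizedAugLagrangian_add_le_of_isMin {c z₀ z : E} {h : E → ℝ} {A : E →L[ℝ] F}
    {b lam : F} {β μ : ℝ} (hh : ConvexOn ℝ univ h)
    (hmin : ∀ u, linearizedAugLagrangian c h A b lam β μ z₀ z ≤
      linearizedAugLagrangian c h A b lam β μ z₀ u) (u : E) :
    linearizedAugLagrangian c h A b lam β μ z₀ z +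
        (β / 2 * ‖A u - A z‖ ^ 2 + μ / 2 * ‖u - z‖ ^ 2) ≤
      linearizedAugLagrangian c h A b lam β μ z₀ u := by
  refine add_le_of_isMin_of_comb_le hmin fun t ht => ?_
  have hconv : h ((1 - t) • z + t • u) ≤ (1 - t) * h z + t * h u :=
    hh.2 (mem_univ z) (mem_univ u) (sub_nonneg.2 ht.2) ht.1.le (by ring)
  have hA := norm_one_sub_smul_add_smul_sub_sq (A z) (A u) b t
  have hz := norm_one_sub_smul_add_smul_sub_sq z u z₀ t
  simp only [linearizedAugLagrangian, map_add, map_smul, inner_add_right,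
    real_inner_smul_right, hA, hz]
  linarith

noncomputable def lagrangianGap (f : E → ℝ) (A : E →L[ℝ] F) (b : F) (xs : E) (lams : F)
    (x : E) : ℝ :=
  f x - f xs + ⟪lams, A x - b⟫ + 1 / 2 * ‖A x - b‖ ^ 2

end AugmentedLagrangian

section FastPALM

variable {E F : Type*} [NormedAddCommGroup E] [InnerProductSpace ℝ E] [CompleteSpace E]
  [NormedAddCommGroup F] [InnerProductSpace ℝ F]
  {g h : E → ℝ} {g' : E → E} {L : ℝ} {A : E →L[ℝ] F} {b : F} {xs : E} {lams : F}

theorem fastPALM_step_le (hg : ConvexOn ℝ univ g) (hh : ConvexOn ℝ univ h)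
    (hgrad : ∀ x, HasGradientAt g (g' x) x) (hlip : ∀ x y, ‖g' x - g' y‖ ≤ L * ‖x - y‖)
    (hfeas : A xs = b) {θ : ℝ} (hθ₀ : 0 < θ) (hθ₁ : θ ≤ 1) {x z z' : E} {lam : F}
    (hmin : ∀ u,
      linearizedAugLagrangian (g' ((1 - θ) • x + θ • z)) h A b lam (1 / θ) (L * θ) z z' ≤
        linearizedAugLagrangian (g' ((1 - θ) • x + θ • z)) h A b lam (1 / θ) (L * θ) z u) :
    1 / θ ^ 2 * lagrangianGap (fun u => g u + h u) A b xs lams ((1 - θ) • x + θ • z') +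
        1 / 2 * ‖lam + (1 / θ) • (A z' - b) - lams‖ ^ 2 + L / 2 * ‖z' - xs‖ ^ 2 ≤
      (1 - θ) / θ ^ 2 * lagrangianGap (fun u => g u + h u) A b xs lams x +
        1 / 2 * ‖lam - lams‖ ^ 2 + L / 2 * ‖z - xs‖ ^ 2 := by
  have hgstep := accelerated_gradient_step_le hg hgrad hlip hθ₀.le hθ₁ x z z' xs
  have hhstep : h ((1 - θ) • x + θ • z') ≤ (1 - θ) * h x + θ * h z' :=
    hh.2 (mem_univ x) (mem_univ z') (sub_nonneg.2 hθ₁) hθ₀.le (by ring)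
  have hsub := linearizedAugLagrangian_add_le_of_isMin hh hmin xs
  simp only [linearizedAugLagrangian, hfeas, sub_self, norm_zero, norm_sub_rev b,
    norm_sub_rev xs] at hsub
  have hdual : θ ^ 2 * ‖lam + (1 / θ) • (A z' - b) - lams‖ ^ 2 =
      θ ^ 2 * ‖lam - lams‖ ^ 2 + 2 * θ * ⟪lam - lams, A z' - b⟫ + ‖A z' - b‖ ^ 2 := by
    rw [show lam + (1 / θ) • (A z' - b) - lams = (lam - lams) + (1 / θ) • (A z' - b) by abel,
      norm_add_sq_real, norm_smul, real_inner_smul_right, Real.norm_of_nonneg (by positivity)]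
    field_simp
  have hres : A ((1 - θ) • x + θ • z') - b = (1 - θ) • A x + θ • A z' - b := by
    rw [map_add, map_smul, map_smul]
  have hresnorm := norm_one_sub_smul_add_smul_sub_sq (A x) (A z') b θ
  have hresinner : ⟪lams, A ((1 - θ) • x + θ • z') - b⟫ =
      (1 - θ) * ⟪lams, A x - b⟫ + θ * ⟪lams, A z' - b⟫ := by
    rw [hres]
    simp only [inner_sub_right, inner_add_right, real_inner_smul_right]
    ring
  have hpenalty : θ * (1 / θ / 2 * ‖A z' - b‖ ^ 2) = ‖A z' - b‖ ^ 2 / 2 := by field_simp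
  have key : lagrangianGap (fun u => g u + h u) A b xs lams ((1 - θ) • x + θ • z') +
      θ ^ 2 / 2 * ‖lam + (1 / θ) • (A z' - b) - lams‖ ^ 2 + L * θ ^ 2 / 2 * ‖z' - xs‖ ^ 2 ≤
      (1 - θ) * lagrangianGap (fun u => g u + h u) A b xs lams x +
        θ ^ 2 / 2 * ‖lam - lams‖ ^ 2 + L * θ ^ 2 / 2 * ‖z - xs‖ ^ 2 := by
    rw [lagrangianGap, lagrangianGap, hresinner, hres, hresnorm]
    simp only [inner_sub_right, inner_sub_left] at hgstep hdual ⊢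
    linarith [mul_le_mul_of_nonneg_left hsub hθ₀.le,
      mul_nonneg (mul_nonneg hθ₀.le (sub_nonneg.2 hθ₁)) (sq_nonneg ‖A z' - A x‖),
      mul_nonneg (sub_nonneg.2 hθ₁) (sq_nonneg ‖A z' - b‖)]
  have hθsq : 0 < θ ^ 2 := by positivity
  refine le_of_mul_le_mul_left ?_ hθsq
  exact (le_of_eq (by field_simp)).trans (key.trans (le_of_eq (by field_simp)))

end FastPALM

/-- The positive root `s` of `s² = t² (1 - s)`. -/
noncomputable def thetaNext (t : ℝ) : ℝ := (-t ^ 2 + Real.sqrt (t ^ 4 + 4 * t ^ 2)) / 2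

theorem thetaNext_sq (t : ℝ) : thetaNext t ^ 2 = t ^ 2 * (1 - thetaNext t) := by
  have hroot : 2 * thetaNext t + t ^ 2 = Real.sqrt (t ^ 4 + 4 * t ^ 2) := by
    rw [thetaNext]; ring
  have hsq := Real.sq_sqrt (by positivity : (0 : ℝ) ≤ t ^ 4 + 4 * t ^ 2)
  rw [← hroot] at hsq
  linarith

theorem thetaNext_pos {t : ℝ} (ht : t ≠ 0) : 0 < thetaNext t := by
  have ht2 : 0 < t ^ 2 := by positivity
  have hlt : t ^ 2 < Real.sqrt (t ^ 4 + 4 * t ^ 2) :=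
    Real.lt_sqrt_of_sq_lt (by nlinarith)
  rw [thetaNext]; linarith

theorem thetaNext_lt_one {t : ℝ} (ht : t ≠ 0) : thetaNext t < 1 := by
  have hprod : 0 < t ^ 2 * (1 - thetaNext t) := thetaNext_sq t ▸ pow_pos (thetaNext_pos ht) 2
  linarith [pos_of_mul_pos_right hprod (sq_nonneg t)]

theorem one_sub_thetaNext_div_sq {t : ℝ} (ht : t ≠ 0) :
    (1 - thetaNext t) / thetaNext t ^ 2 = 1 / t ^ 2 := by
  have hs := (thetaNext_pos ht).ne'
  rw [div_eq_div_iff (by positivity) (by positivity), thetaNext_sq]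
  ring

theorem inv_add_half_le_inv_thetaNext {t : ℝ} (ht : 0 < t) :
    t⁻¹ + 1 / 2 ≤ (thetaNext t)⁻¹ := by
  have hs := thetaNext_pos ht.ne'
  have hu : 1 < (thetaNext t)⁻¹ := one_lt_inv_iff₀.2 ⟨hs, thetaNext_lt_one ht.ne'⟩
  have hv : t⁻¹ ^ 2 = (thetaNext t)⁻¹ ^ 2 - (thetaNext t)⁻¹ := by
    have := one_sub_thetaNext_div_sq ht.ne'
    field_simp at this ⊢
    linarith
  nlinarith [inv_pos.2 ht]

section Sequence

variable {θ : ℕ → ℝ}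

theorem pos_and_le_one_of_thetaNext (h0 : θ 0 = 1) (hrec : ∀ k, θ (k + 1) = thetaNext (θ k)) :
    ∀ k, 0 < θ k ∧ θ k ≤ 1
  | 0 => by simp [h0]
  | k + 1 => by
    have hk := (pos_and_le_one_of_thetaNext h0 hrec k).1.ne'
    rw [hrec]
    exact ⟨thetaNext_pos hk, (thetaNext_lt_one hk).le⟩

theorem le_two_div_of_thetaNext (h0 : θ 0 = 1) (hrec : ∀ k, θ (k + 1) = thetaNext (θ k))
    (k : ℕ) : θ k ≤ 2 / (k + 2) := by
  have hpos := fun k => (pos_and_le_one_of_thetaNext h0 hrec k).1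
  have hinv : ∀ k : ℕ, ((k : ℝ) + 2) / 2 ≤ (θ k)⁻¹ := by
    intro k
    induction k with
    | zero => simp [h0]
    | succ k ih =>
      rw [hrec]
      push_cast
      linarith [inv_add_half_le_inv_thetaNext (hpos k)]
  simpa only [inv_div] using (le_inv_comm₀ (by positivity) (hpos k)).1 (hinv k)

end Sequence

theorem fast_palm_convergence_general (m p : ℕ)
    (g h : EuclideanSpace ℝ (Fin m) → ℝ)
    (g' : EuclideanSpace ℝ (Fin m) → EuclideanSpace ℝ (Fin m)) (L : ℝ) (hL : 0 ≤ L)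
    (hgconv : ConvexOn ℝ Set.univ g) (hhconv : ConvexOn ℝ Set.univ h)
    (hgrad : ∀ x, HasGradientAt g (g' x) x)
    (hlip : ∀ x y, ‖g' x - g' y‖ ≤ L * ‖x - y‖)
    (A : EuclideanSpace ℝ (Fin m) →L[ℝ] EuclideanSpace ℝ (Fin p))
    (b : EuclideanSpace ℝ (Fin p))
    (f : EuclideanSpace ℝ (Fin m) → ℝ) (hf : f = fun u => g u + h u)
    (θ β : ℕ → ℝ) (hθ0 : θ 0 = 1)
    (hθrec : ∀ k, θ (k + 1) =
      (-(θ k) ^ 2 + Real.sqrt ((θ k) ^ 4 + 4 * (θ k) ^ 2)) / 2)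
    (hβ : ∀ k, β k = 1 / θ k)
    (x y z : ℕ → EuclideanSpace ℝ (Fin m))
    (lam : ℕ → EuclideanSpace ℝ (Fin p))
    (hy : ∀ k, y (k + 1) = (1 - θ k) • x k + θ k • z k)
    (hz : ∀ k, ∀ u : EuclideanSpace ℝ (Fin m),
      ⟪g' (y (k + 1)), z (k + 1)⟫ + h (z (k + 1)) + ⟪lam k, A (z (k + 1))⟫ +
          β k / 2 * ‖A (z (k + 1)) - b‖ ^ 2 +
          L * θ k / 2 * ‖z (k + 1) - z k‖ ^ 2 ≤
        ⟪g' (y (k + 1)), u⟫ + h u + ⟪lam k, A u⟫ + β k / 2 * ‖A u - b‖ ^ 2 +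
          L * θ k / 2 * ‖u - z k‖ ^ 2)
    (hx : ∀ k, x (k + 1) = (1 - θ k) • x k + θ k • z (k + 1))
    (hlam : ∀ k, lam (k + 1) = lam k + β k • (A (z (k + 1)) - b))
    (xs : EuclideanSpace ℝ (Fin m)) (lams : EuclideanSpace ℝ (Fin p))
    (hfeas : A xs = b)
    (K : ℕ) :
    f (x (K + 1)) - f xs + ⟪lams, A (x (K + 1)) - b⟫ +
        1 / 2 * ‖A (x (K + 1)) - b‖ ^ 2 ≤
      2 / (K + 2 : ℝ) ^ 2 * (L * ‖z 0 - xs‖ ^ 2 + ‖lam 0 - lams‖ ^ 2) := by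
  subst hf
  have hθ := pos_and_le_one_of_thetaNext hθ0 hθrec
  set V : ℕ → ℝ := fun k => (1 - θ k) / θ k ^ 2 *
      lagrangianGap (fun u => g u + h u) A b xs lams (x k) +
    1 / 2 * ‖lam k - lams‖ ^ 2 + L / 2 * ‖z k - xs‖ ^ 2 with hV
  have hcoef (k : ℕ) : (1 - θ (k + 1)) / θ (k + 1) ^ 2 = 1 / θ k ^ 2 := by
    rw [hθrec k]; exact one_sub_thetaNext_div_sq (hθ k).1.ne'
  have hstep (k : ℕ) : V (k + 1) ≤ V k := by
    have hmin := hz k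
    rw [hy k, hβ k] at hmin
    simpa only [hV, hcoef, hx k, hlam k, hβ k] using
      fastPALM_step_le hgconv hhconv hgrad hlip hfeas (hθ k).1 (hθ k).2 hmin
  have hdecay : V (K + 1) ≤ V 0 := antitone_nat_of_succ_le hstep (Nat.zero_le _)
  simp only [hV, hcoef, hθ0, sub_self, zero_div, zero_mul, zero_add] at hdecay
  have hθK := (hθ K).1
  calc lagrangianGap (fun u => g u + h u) A b xs lams (x (K + 1))
      _ ≤ θ K ^ 2 * (1 / 2 * ‖lam 0 - lams‖ ^ 2 + L / 2 * ‖z 0 - xs‖ ^ 2) := by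
        rw [← div_le_iff₀' (by positivity), ← one_div_mul_eq_div]
        nlinarith [sq_nonneg ‖lam (K + 1) - lams‖, sq_nonneg ‖z (K + 1) - xs‖]
      _ ≤ (2 / (K + 2)) ^ 2 * (1 / 2 * ‖lam 0 - lams‖ ^ 2 + L / 2 * ‖z 0 - xs‖ ^ 2) := by
        gcongr
        exact le_two_div_of_thetaNext hθ0 hθrec K
      _ = 2 / (K + 2 : ℝ) ^ 2 * (L * ‖z 0 - xs‖ ^ 2 + ‖lam 0 - lams‖ ^ 2) := by
        rw [div_pow]; ring

theorem fast_palm_convergence (m p : ℕ)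
    (g h : EuclideanSpace ℝ (Fin m) → ℝ)
    (g' : EuclideanSpace ℝ (Fin m) → EuclideanSpace ℝ (Fin m)) (L : ℝ) (hL : 0 ≤ L)
    (hgconv : ConvexOn ℝ Set.univ g) (hhconv : ConvexOn ℝ Set.univ h)
    (hhlsc : LowerSemicontinuous h)
    (hgrad : ∀ x, HasGradientAt g (g' x) x)
    (hlip : ∀ x y, ‖g' x - g' y‖ ≤ L * ‖x - y‖)
    (A : EuclideanSpace ℝ (Fin m) →L[ℝ] EuclideanSpace ℝ (Fin p))
    (b : EuclideanSpace ℝ (Fin p))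
    (f : EuclideanSpace ℝ (Fin m) → ℝ) (hf : f = fun u => g u + h u)
    (θ β : ℕ → ℝ) (hθ0 : θ 0 = 1) (hβ0 : β 0 = 1)
    (hθrec : ∀ k, θ (k + 1) =
      (-(θ k) ^ 2 + Real.sqrt ((θ k) ^ 4 + 4 * (θ k) ^ 2)) / 2)
    (hβ : ∀ k, β k = 1 / θ k)
    (x y z : ℕ → EuclideanSpace ℝ (Fin m))
    (lam : ℕ → EuclideanSpace ℝ (Fin p))
    (hy : ∀ k, y (k + 1) = (1 - θ k) • x k + θ k • z k)
    (hz : ∀ k, ∀ u : EuclideanSpace ℝ (Fin m),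
      ⟪g' (y (k + 1)), z (k + 1)⟫ + h (z (k + 1)) + ⟪lam k, A (z (k + 1))⟫ +
          β k / 2 * ‖A (z (k + 1)) - b‖ ^ 2 +
          L * θ k / 2 * ‖z (k + 1) - z k‖ ^ 2 ≤
        ⟪g' (y (k + 1)), u⟫ + h u + ⟪lam k, A u⟫ + β k / 2 * ‖A u - b‖ ^ 2 +
          L * θ k / 2 * ‖u - z k‖ ^ 2)
    (hx : ∀ k, x (k + 1) = (1 - θ k) • x k + θ k • z (k + 1))
    (hlam : ∀ k, lam (k + 1) = lam k + β k • (A (z (k + 1)) - b))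
    (xs : EuclideanSpace ℝ (Fin m)) (lams : EuclideanSpace ℝ (Fin p))
    (hfeas : A xs = b)
    (hsubgrad : -(ContinuousLinearMap.adjoint A lams) ∈ subdiff f xs)
    (K : ℕ) :
    f (x (K + 1)) - f xs + ⟪lams, A (x (K + 1)) - b⟫ +
        1 / 2 * ‖A (x (K + 1)) - b‖ ^ 2 ≤
      2 / (K + 2 : ℝ) ^ 2 * (L * ‖z 0 - xs‖ ^ 2 + ‖lam 0 - lams‖ ^ 2) :=
  fast_palm_convergence_general m p g h g' L hL hgconv hhconv hgrad hlip A b f hf θ β hθ0 hθrec hβ x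
    y z lam hy hz hx hlam xs lams hfeas K
end

section
/- Let λ^k, λ̂^{k+1} = λ^k + β(A z^k − b), λ^{k+1} = λ^k + β(A z^{k+1} − b) with β > 0, where A(z) = ∑_{i=1}^n A_i(z_i) for linear maps A_i with η_i > n‖A_i‖². Then for any λ: ⟨A z^{k+1} − b, λ − λ̂^{k+1}⟩ + (βα/2)‖A z^{k+1} − b‖² ≤ (1/(2β))(‖λ^k − λ‖² − ‖λ^{k+1} − λ‖²) + (β/2)∑_{i=1}^n η_i‖z_i^{k+1} − z_i^k‖², where α = min{1/(n+1), min_i (η_i − n‖A_i‖²)/((n+1)‖A_i‖²)}. -/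
open scoped RealInnerProductSpace



lemma key_scalar (nn α D S R V W : ℝ) (hn : 0 < nn) (hα0 : 0 ≤ α) (hα1 : α*(nn+1) ≤ 1)
    (hD : 0 ≤ D) (hS : 0 ≤ S) (hR : 0 ≤ R) (hV : 0 ≤ V)
    (htri : R ≤ D + S) (hD2 : D^2 ≤ nn * V) (hVW : (nn + α*(nn+1))*V ≤ W) :
    D^2/2 - S^2/2 + α/2*R^2 ≤ W/2 := by
  have hR2 : R^2 ≤ (1 + 1/nn) * D^2 + (1 + nn) * S^2 := by
    have h2 : 2*(D*S) ≤ (1/nn)*D^2 + nn*S^2 := by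
      have e : (1/nn)*D^2 + nn*S^2 - 2*(D*S) = (D - nn*S)^2 / nn := by
        field_simp; ring
      nlinarith [div_nonneg (sq_nonneg (D - nn*S)) hn.le]
    nlinarith
  have h3 : α/2 * R^2 ≤ α/2 * ((1 + 1/nn) * D^2 + (1 + nn) * S^2) := by nlinarith
  have h4 : α/2 * (1+nn) * S^2 ≤ S^2/2 := by nlinarith [sq_nonneg S]
  -- D^2/2 + α/2*(1+1/nn)*D^2 = (nn + α*(nn+1))/(2*nn) * D^2 ≤ (nn+α*(nn+1))/(2*nn) * nn * V ≤ W/2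
  have h5 : (1 + α*(1+1/nn)) * D^2 ≤ (1 + α*(1+1/nn)) * (nn*V) := by
    have : 0 ≤ 1 + α*(1+1/nn) := by positivity
    nlinarith
  have h6 : (1 + α*(1+1/nn)) * (nn*V) = (nn + α*(nn+1)) * V := by field_simp
  nlinarith


set_option maxHeartbeats 1000000 in
theorem fast_pladmm_dual_inequality (n p : ℕ) (hn : 0 < n) (md : Fin n → ℕ)
    (A : ∀ i, EuclideanSpace ℝ (Fin (md i)) →L[ℝ] EuclideanSpace ℝ (Fin p))
    (η : Fin n → ℝ) (hη : ∀ i, (n : ℝ) * ‖A i‖ ^ 2 < η i)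
    (β : ℝ) (hβ : 0 < β)
    (b : EuclideanSpace ℝ (Fin p))
    (zk zk1 : ∀ i, EuclideanSpace ℝ (Fin (md i)))
    (lamk lamhat lamk1 : EuclideanSpace ℝ (Fin p))
    (hhat : lamhat = lamk + β • ((∑ i, A i (zk i)) - b))
    (hupd : lamk1 = lamk + β • ((∑ i, A i (zk1 i)) - b))
    (α : ℝ)
    (hα : α = min (1 / ((n : ℝ) + 1))
      (⨅ i : Fin n, (η i - n * ‖A i‖ ^ 2) / ((n + 1) * ‖A i‖ ^ 2)))
    (lam : EuclideanSpace ℝ (Fin p)) :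
    ⟪(∑ i, A i (zk1 i)) - b, lam - lamhat⟫ +
        β * α / 2 * ‖(∑ i, A i (zk1 i)) - b‖ ^ 2 ≤
      1 / (2 * β) * (‖lamk - lam‖ ^ 2 - ‖lamk1 - lam‖ ^ 2) +
        β / 2 * ∑ i, η i * ‖zk1 i - zk i‖ ^ 2 := by
  have hne : Nonempty (Fin n) := ⟨⟨0, hn⟩⟩
  set r := (∑ i, A i (zk1 i)) - b with hr
  set s := (∑ i, A i (zk i)) - b with hs
  have hn1 : (0:ℝ) < (n:ℝ) + 1 := by positivity
  have hnpos : (0:ℝ) < n := by exact_mod_cast hn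
  -- properties of α
  have hα0 : 0 ≤ α := by
    rw [hα]
    apply le_min (by positivity)
    apply le_ciInf
    intro i
    apply div_nonneg (le_of_lt (by linarith [hη i])) (by positivity)
  have hα1 : α * ((n:ℝ) + 1) ≤ 1 := by
    have : α ≤ 1 / ((n:ℝ) + 1) := hα ▸ min_le_left _ _
    have h2 := mul_le_mul_of_nonneg_right this hn1.le
    calc α * ((n:ℝ)+1) ≤ (1/((n:ℝ)+1)) * ((n:ℝ)+1) := h2
    _ = 1 := by field_simp
  have hαi : ∀ i, α * (((n:ℝ) + 1) * ‖A i‖ ^ 2) ≤ η i - n * ‖A i‖ ^ 2 := by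
    intro i
    have h1 : α ≤ (η i - n * ‖A i‖ ^ 2) / ((n + 1) * ‖A i‖ ^ 2) := by
      rw [hα]
      refine le_trans (min_le_right _ _) (ciInf_le ⟨0, ?_⟩ i)
      rintro x ⟨j, rfl⟩
      exact div_nonneg (le_of_lt (by linarith [hη j])) (by positivity)
    rcases eq_or_lt_of_le (norm_nonneg (A i)) with h0 | h0
    · rw [← h0]; simpa using le_of_lt (by simpa [← h0] using hη i)
    · have hd : (0:ℝ) < ((n:ℝ) + 1) * ‖A i‖ ^ 2 := by positivity
      calc α * (((n:ℝ)+1) * ‖A i‖^2)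
          ≤ ((η i - n * ‖A i‖ ^ 2) / ((n + 1) * ‖A i‖ ^ 2)) * (((n:ℝ)+1) * ‖A i‖^2) := by
            nlinarith
        _ = η i - n * ‖A i‖ ^ 2 := by field_simp
  -- r - s = sum of A i applied to differences
  have hrs : r - s = ∑ i, A i (zk1 i - zk i) := by
    simp only [hr, hs, map_sub]
    rw [Finset.sum_sub_distrib]
    abel
  -- D ≤ sum of norms
  have hD : ‖r - s‖ ≤ ∑ i, ‖A i‖ * ‖zk1 i - zk i‖ := by
    rw [hrs]
    refine le_trans (norm_sum_le _ _) (Finset.sum_le_sum fun i _ => ?_)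
    exact (A i).le_opNorm _
  have hD2 : ‖r - s‖ ^ 2 ≤ (n:ℝ) * ∑ i, ‖A i‖ ^ 2 * ‖zk1 i - zk i‖ ^ 2 := by
    have h1 : (∑ i, ‖A i‖ * ‖zk1 i - zk i‖) ^ 2
        ≤ (n : ℝ) * ∑ i, (‖A i‖ * ‖zk1 i - zk i‖) ^ 2 := by
      have h := sq_sum_le_card_mul_sum_sq (s := (Finset.univ : Finset (Fin n)))
        (f := fun i => ‖A i‖ * ‖zk1 i - zk i‖)
      simpa using h
    have h2 : ‖r - s‖ ^ 2 ≤ (∑ i, ‖A i‖ * ‖zk1 i - zk i‖) ^ 2 := by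
      apply sq_le_sq' _ hD
      have := norm_nonneg (r - s); nlinarith
    simp only [mul_pow] at h1
    linarith
  -- sum bound
  have hVW : ((n:ℝ) + α * ((n:ℝ)+1)) * ∑ i, ‖A i‖ ^ 2 * ‖zk1 i - zk i‖ ^ 2
      ≤ ∑ i, η i * ‖zk1 i - zk i‖ ^ 2 := by
    rw [Finset.mul_sum]
    refine Finset.sum_le_sum fun i _ => ?_
    have := hαi i
    nlinarith [sq_nonneg ‖zk1 i - zk i‖, norm_nonneg (zk1 i - zk i)]
  -- norm expansion of lamk1
  have hexp : ‖lamk1 - lam‖ ^ 2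
      = ‖lamk - lam‖ ^ 2 + 2 * (β * ⟪lamk - lam, r⟫) + β ^ 2 * ‖r‖ ^ 2 := by
    have : lamk1 - lam = (lamk - lam) + β • r := by rw [hupd]; abel
    rw [this, norm_add_sq_real, real_inner_smul_right, norm_smul,
      Real.norm_eq_abs, abs_of_pos hβ]
    ring
  have hinner : ⟪r, lam - lamhat⟫ = ⟪r, lam - lamk⟫ - β * ⟪r, s⟫ := by
    rw [hhat]
    have : lam - (lamk + β • s) = (lam - lamk) - β • s := by abel
    rw [this, inner_sub_right, real_inner_smul_right]
  have key : ‖r - s‖ ^ 2 / 2 - ‖s‖ ^ 2 / 2 + α / 2 * ‖r‖ ^ 2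
      ≤ (∑ i, η i * ‖zk1 i - zk i‖ ^ 2) / 2 := by
    have htri : ‖r‖ ≤ ‖r - s‖ + ‖s‖ := by
      simpa using norm_add_le (r - s) s
    exact key_scalar (n:ℝ) α ‖r - s‖ ‖s‖ ‖r‖
      (∑ i, ‖A i‖ ^ 2 * ‖zk1 i - zk i‖ ^ 2) (∑ i, η i * ‖zk1 i - zk i‖ ^ 2)
      hnpos hα0 hα1 (norm_nonneg _) (norm_nonneg _) (norm_nonneg _)
      (Finset.sum_nonneg fun i _ => mul_nonneg (sq_nonneg _) (sq_nonneg _))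
      htri hD2 hVW
  -- assemble
  have hrhs1 : 1 / (2 * β) * (‖lamk - lam‖ ^ 2 - ‖lamk1 - lam‖ ^ 2)
      = ⟪r, lam - lamk⟫ - β / 2 * ‖r‖ ^ 2 := by
    rw [hexp]
    have : ⟪lamk - lam, r⟫ = - ⟪r, lam - lamk⟫ := by
      rw [real_inner_comm, ← inner_neg_right]; congr 1; abel
    rw [this]
    field_simp
    ring
  rw [hrhs1, hinner]
  have hip : ⟪r, s⟫ = (‖r‖ ^ 2 + ‖s‖ ^ 2 - ‖r - s‖ ^ 2) / 2 := by
    have := norm_sub_sq_real r s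
    linarith
  rw [hip]
  nlinarith [mul_le_mul_of_nonneg_left key (le_of_lt hβ)]
end

section
/- Let (θ_k) be the Fast PALM stepsize sequence (θ_0 = 1, (1 − θ_{k+1})/θ_{k+1}² = 1/θ_k², θ_k > 0) and β > 0 fixed. If for each k one has the per-iteration bound E_{k+1}/θ_k² − E_k(1−θ_k)/θ_k² + (1/θ_k)S_{k+1} ≤ (1/2)(a_k − a_{k+1}) + (1/(2θ_k))(b_k − b_{k+1}) + (1/(2θ_k))(c_k − c_{k+1}) with all a_k, b_k, c_k ≥ 0, θ_k ≤ 1, and S_{k+1} arbitrary reals, then for every K: E_{K+1}/θ_K² + ∑_{k=0}^K S_{k+1}/θ_k ≤ (1/2)(a_0 + ∑_{k=0}^K b_k + c_0/θ_0 + ∑_{k=1}^K c_k(1/θ_k − 1/θ_{k-1})) ≤ (1/2)(a_0 + (K+1)max_k b_k + c_0 + K max_k c_k). -/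
/-!
Summing the per-iteration bound over `k ≤ K` telescopes every term. The recurrence says
`E (k + 1) / θ k ^ 2 = E (k + 1) * (1 - θ (k + 1)) / θ (k + 1) ^ 2`, so the objective gaps
collapse to `E (K + 1) / θ K ^ 2` (the `k = 0` term vanishes as `θ 0 = 1`). Abel summation turns
the `b`- and `c`-terms, weighted by `1 / θ k`, into sums weighted by the increments
`1 / θ k - 1 / θ (k - 1)`, which lie in `(0, 1)` because `w = 1 / θ` satisfies
`w (k + 1) ^ 2 - w (k + 1) = w k ^ 2`. Bounding those increments by `1` and the entries by their
maxima gives both inequalities.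
-/

open Finset

lemma sum_Icc_one_eq_sum_range {M : Type*} [AddCommMonoid M] (f : ℕ → M) (K : ℕ) :
    ∑ k ∈ Icc 1 K, f k = ∑ k ∈ range K, f (k + 1) := by
  rw [← Ico_add_one_right_eq_Icc, sum_Ico_eq_sum_range, add_tsub_cancel_right]
  simp only [add_comm 1]

lemma sum_range_le_mul_of_le {f : ℕ → ℝ} {M : ℝ} (n : ℕ) (h : ∀ k < n, f k ≤ M) :
    ∑ k ∈ range n, f k ≤ n * M := by
  simpa using sum_le_card_nsmul (range n) f M fun k hk ↦ h k (mem_range.mp hk)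

lemma sum_range_mul_sub_succ {R : Type*} [CommRing R] (w x : ℕ → R) (K : ℕ) :
    ∑ k ∈ range (K + 1), w k * (x k - x (k + 1)) =
      w 0 * x 0 + ∑ k ∈ range K, x (k + 1) * (w (k + 1) - w k) - w K * x (K + 1) := by
  induction K with
  | zero => simp [mul_sub]
  | succ K ih => rw [sum_range_succ, ih, sum_range_succ]; ring

lemma sub_pos_and_sub_lt_one_of_sq_sub_self_eq_sq {x y : ℝ} (hx : 0 < x) (hy : 0 < y)
    (h : y ^ 2 - y = x ^ 2) : 0 < y - x ∧ y - x < 1 := by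
  constructor <;> nlinarith

section FastStepsize

variable {θ : ℕ → ℝ}

lemma one_div_stepsize_increment (hθpos : ∀ k, 0 < θ k)
    (hθrec : ∀ k, (1 - θ (k + 1)) / θ (k + 1) ^ 2 = 1 / θ k ^ 2) (k : ℕ) :
    0 < 1 / θ (k + 1) - 1 / θ k ∧ 1 / θ (k + 1) - 1 / θ k < 1 := by
  have := hθpos k
  have := hθpos (k + 1)
  refine sub_pos_and_sub_lt_one_of_sq_sub_self_eq_sq (by positivity) (by positivity) ?_
  simp only [one_div_pow]
  rw [← hθrec k]
  field_simp

lemma sum_range_sub_telescope_of_stepsize_rec (hθ0 : θ 0 = 1)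
    (hθrec : ∀ k, (1 - θ (k + 1)) / θ (k + 1) ^ 2 = 1 / θ k ^ 2) (E : ℕ → ℝ) (K : ℕ) :
    ∑ k ∈ range (K + 1), (E (k + 1) / θ k ^ 2 - E k * (1 - θ k) / θ k ^ 2) =
      E (K + 1) / θ K ^ 2 := by
  have hshift : ∀ k, E (k + 1) / θ k ^ 2 = E (k + 1) * (1 - θ (k + 1)) / θ (k + 1) ^ 2 := by
    intro k
    rw [mul_div_assoc, hθrec, mul_one_div]
  simp_rw [hshift]
  rw [sum_range_sub (fun k ↦ E k * (1 - θ k) / θ k ^ 2), hθ0]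
  simp

lemma sum_range_le_of_step_le (hθ0 : θ 0 = 1)
    (hθrec : ∀ k, (1 - θ (k + 1)) / θ (k + 1) ^ 2 = 1 / θ k ^ 2) {E S a b c : ℕ → ℝ}
    (hstep : ∀ k,
      E (k + 1) / θ k ^ 2 - E k * (1 - θ k) / θ k ^ 2 + (1 / θ k) * S (k + 1) ≤
        1 / 2 * (a k - a (k + 1)) + 1 / (2 * θ k) * (b k - b (k + 1)) +
          1 / (2 * θ k) * (c k - c (k + 1)))
    (K : ℕ) :
    E (K + 1) / θ K ^ 2 + ∑ k ∈ range (K + 1), S (k + 1) / θ k ≤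
      1 / 2 * (a 0 - a (K + 1)) + 1 / 2 * ∑ k ∈ range (K + 1), 1 / θ k * (b k - b (k + 1)) +
        1 / 2 * ∑ k ∈ range (K + 1), 1 / θ k * (c k - c (k + 1)) := by
  have hhalf : ∀ t y : ℝ, 1 / (2 * t) * y = 1 / 2 * (1 / t * y) := fun t y ↦ by ring
  calc E (K + 1) / θ K ^ 2 + ∑ k ∈ range (K + 1), S (k + 1) / θ k
      = ∑ k ∈ range (K + 1), (E (k + 1) / θ k ^ 2 - E k * (1 - θ k) / θ k ^ 2 +
          (1 / θ k) * S (k + 1)) := by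
        rw [sum_add_distrib, sum_range_sub_telescope_of_stepsize_rec hθ0 hθrec]
        simp only [one_div_mul_eq_div]
    _ ≤ ∑ k ∈ range (K + 1), (1 / 2 * (a k - a (k + 1)) + 1 / (2 * θ k) * (b k - b (k + 1)) +
          1 / (2 * θ k) * (c k - c (k + 1))) := sum_le_sum fun k _ ↦ hstep k
    _ = _ := by
        simp only [hhalf, sum_add_distrib, ← mul_sum, sum_range_sub']

end FastStepsize

theorem fast_pladmm_telescoping_general (θ : ℕ → ℝ) (hθ0 : θ 0 = 1) (hθpos : ∀ k, 0 < θ k)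
    (hθrec : ∀ k, (1 - θ (k + 1)) / (θ (k + 1)) ^ 2 = 1 / (θ k) ^ 2)
    (E S a b c : ℕ → ℝ)
    (ha : ∀ k, 0 ≤ a k) (hb : ∀ k, 0 ≤ b k) (hc : ∀ k, 0 ≤ c k)
    (hstep : ∀ k,
      E (k + 1) / (θ k) ^ 2 - E k * (1 - θ k) / (θ k) ^ 2 + (1 / θ k) * S (k + 1) ≤
        1 / 2 * (a k - a (k + 1)) + 1 / (2 * θ k) * (b k - b (k + 1)) +
          1 / (2 * θ k) * (c k - c (k + 1)))
    (K : ℕ) :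
    E (K + 1) / (θ K) ^ 2 + ∑ k ∈ Finset.range (K + 1), S (k + 1) / θ k ≤
        1 / 2 * (a 0 + ∑ k ∈ Finset.range (K + 1), b k + c 0 / θ 0 +
          ∑ k ∈ Finset.Icc 1 K, c k * (1 / θ k - 1 / θ (k - 1))) ∧
      1 / 2 * (a 0 + ∑ k ∈ Finset.range (K + 1), b k + c 0 / θ 0 +
          ∑ k ∈ Finset.Icc 1 K, c k * (1 / θ k - 1 / θ (k - 1))) ≤
        1 / 2 * (a 0 + (K + 1) * (Finset.range (K + 1)).sup' Finset.nonempty_range_add_one b +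
          c 0 + K * (Finset.range (K + 1)).sup' Finset.nonempty_range_add_one c) := by
  have hinc := one_div_stepsize_increment hθpos hθrec
  have hbound := sum_range_le_of_step_le hθ0 hθrec hstep K
  rw [sum_range_mul_sub_succ, sum_range_mul_sub_succ, hθ0] at hbound
  simp only [sum_Icc_one_eq_sum_range, add_tsub_cancel_right, hθ0, div_one]
  have hb_weighted : ∑ k ∈ range K, b (k + 1) * (1 / θ (k + 1) - 1 / θ k) ≤
      ∑ k ∈ range K, b (k + 1) :=
    sum_le_sum fun k _ ↦ mul_le_of_le_one_right (hb _) (hinc k).2.le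
  have hb_sum : ∑ k ∈ range (K + 1), b k ≤ (K + 1 : ℕ) *
      (range (K + 1)).sup' nonempty_range_add_one b :=
    sum_range_le_mul_of_le _ fun k hk ↦ le_sup' b (mem_range.mpr hk)
  have hc_sum : ∑ k ∈ range K, c (k + 1) * (1 / θ (k + 1) - 1 / θ k) ≤
      K * (range (K + 1)).sup' nonempty_range_add_one c :=
    sum_range_le_mul_of_le _ fun k hk ↦
      (mul_le_of_le_one_right (hc _) (hinc k).2.le).trans (le_sup' c (mem_range.mpr (by omega)))
  have hbK : 0 ≤ 1 / θ K * b (K + 1) := mul_nonneg (one_div_pos.mpr (hθpos K)).le (hb _)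
  have hcK : 0 ≤ 1 / θ K * c (K + 1) := mul_nonneg (one_div_pos.mpr (hθpos K)).le (hc _)
  have hb_split := sum_range_succ' b K
  push_cast at hb_sum
  constructor <;> linarith [ha (K + 1)]

theorem fast_pladmm_telescoping (θ : ℕ → ℝ) (hθ0 : θ 0 = 1) (hθpos : ∀ k, 0 < θ k)
    (hθrec : ∀ k, (1 - θ (k + 1)) / (θ (k + 1)) ^ 2 = 1 / (θ k) ^ 2)
    (hθle : ∀ k, θ k ≤ 1)
    (β : ℝ) (hβ : 0 < β)
    (E S a b c : ℕ → ℝ)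
    (ha : ∀ k, 0 ≤ a k) (hb : ∀ k, 0 ≤ b k) (hc : ∀ k, 0 ≤ c k)
    (hstep : ∀ k,
      E (k + 1) / (θ k) ^ 2 - E k * (1 - θ k) / (θ k) ^ 2 + (1 / θ k) * S (k + 1) ≤
        1 / 2 * (a k - a (k + 1)) + 1 / (2 * θ k) * (b k - b (k + 1)) +
          1 / (2 * θ k) * (c k - c (k + 1)))
    (K : ℕ) :
    E (K + 1) / (θ K) ^ 2 + ∑ k ∈ Finset.range (K + 1), S (k + 1) / θ k ≤
        1 / 2 * (a 0 + ∑ k ∈ Finset.range (K + 1), b k + c 0 / θ 0 +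
          ∑ k ∈ Finset.Icc 1 K, c k * (1 / θ k - 1 / θ (k - 1))) ∧
      1 / 2 * (a 0 + ∑ k ∈ Finset.range (K + 1), b k + c 0 / θ 0 +
          ∑ k ∈ Finset.Icc 1 K, c k * (1 / θ k - 1 / θ (k - 1))) ≤
        1 / 2 * (a 0 + (K + 1) * (Finset.range (K + 1)).sup' Finset.nonempty_range_add_one b +
          c 0 + K * (Finset.range (K + 1)).sup' Finset.nonempty_range_add_one c) :=
  fast_pladmm_telescoping_general θ hθ0 hθpos hθrec E S a b c ha hb hc hstep K
end
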